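/- In a Courant algebroid (original skew-symmetric definition), define J := ⟨J(e₁,e₂,e₃),e₄⟩ − ⟨J(e₁,e₂,e₄),e₃⟩ + ⟨J(e₁,e₃,e₄),e₂⟩ − ⟨J(e₂,e₃,e₄),e₁⟩ and K := ⟨[e₁,e₂],[e₃,e₄]⟩ − ⟨[e₁,e₃],[e₂,e₄]⟩ + ⟨[e₁,e₄],[e₂,e₃]⟩, where J(·,·,·) denotes the Jacobiator. Then K + 2J = 0. -/
import Mathlib


/-- A Courant algebroid in the original (skew-symmetric) formulation of
Liu–Weinstein–Xu, presented algebraically: `C` plays the role of the algebra of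
smooth functions on the base, `E` the module of sections, the anchor `ρ` takes
values in derivations of `C`, and `D : C → E` satisfies `⟨Df, e⟩ = ρ(e)f`.
Axiom 1 states that the Jacobiator equals `D T` where
`T(e₁,e₂,e₃) = (1/6)(⟨[e₁,e₂],e₃⟩ + c.p.)`. -/
structure CourantAlgebroidSkew (C E : Type*) [CommRing C] [Algebra ℝ C]
    [AddCommGroup E] [Module ℝ E] [Module C E] [IsScalarTower ℝ C E] where
  bracket : E →ₗ[ℝ] E →ₗ[ℝ] E
  form : E →ₗ[C] E →ₗ[C] C
  rho : E →ₗ[C] Derivation ℝ C C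
  Dop : C →ₗ[ℝ] E
  bracket_skew : ∀ e₁ e₂, bracket e₁ e₂ = - bracket e₂ e₁
  form_symm : ∀ e h, form e h = form h e
  form_nondeg : ∀ e, (∀ h, form e h = 0) → e = 0
  D_def : ∀ (f : C) (e : E), form (Dop f) e = rho e f
  axiom1 : ∀ e₁ e₂ e₃,
    bracket (bracket e₁ e₂) e₃ + bracket (bracket e₂ e₃) e₁ + bracket (bracket e₃ e₁) e₂ =
      Dop ((1/6 : ℝ) • (form (bracket e₁ e₂) e₃ + form (bracket e₂ e₃) e₁ +
        form (bracket e₃ e₁) e₂))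
  axiom2 : ∀ e₁ e₂, rho (bracket e₁ e₂) = ⁅rho e₁, rho e₂⁆
  axiom3 : ∀ (e₁ e₂ : E) (f : C), bracket e₁ (f • e₂) =
    f • bracket e₁ e₂ + rho e₁ f • e₂ - (1/2 : ℝ) • (form e₁ e₂ • Dop f)
  axiom4 : ∀ f g : C, form (Dop f) (Dop g) = 0
  axiom5 : ∀ e h₁ h₂, rho e (form h₁ h₂) =
    form (bracket e h₁ + (1/2 : ℝ) • Dop (form e h₁)) h₂ +
      form h₁ (bracket e h₂ + (1/2 : ℝ) • Dop (form e h₂))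

/-- The Jacobiator of the skew-symmetric bracket. -/
noncomputable def CourantAlgebroidSkew.J {C E : Type*} [CommRing C] [Algebra ℝ C]
    [AddCommGroup E] [Module ℝ E] [Module C E] [IsScalarTower ℝ C E]
    (A : CourantAlgebroidSkew C E) (e₁ e₂ e₃ : E) : E :=
  A.bracket (A.bracket e₁ e₂) e₃ + A.bracket (A.bracket e₂ e₃) e₁ +
    A.bracket (A.bracket e₃ e₁) e₂

/-- `T(e₁,e₂,e₃) = (1/6)(⟨[e₁,e₂],e₃⟩ + cyclic permutations)`. -/
noncomputable def CourantAlgebroidSkew.T {C E : Type*} [CommRing C] [Algebra ℝ C]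
    [AddCommGroup E] [Module ℝ E] [Module C E] [IsScalarTower ℝ C E]
    (A : CourantAlgebroidSkew C E) (e₁ e₂ e₃ : E) : C :=
  (1/6 : ℝ) • (A.form (A.bracket e₁ e₂) e₃ + A.form (A.bracket e₂ e₃) e₁ +
    A.form (A.bracket e₃ e₁) e₂)


section Helpers

variable {C E : Type*} [CommRing C] [Algebra ℝ C]
    [AddCommGroup E] [Module ℝ E] [Module C E] [IsScalarTower ℝ C E]

/-- Pairing of axiom 1 with a fourth section. -/
lemma hA1 (A : CourantAlgebroidSkew C E) (x y z w : E) :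
    A.form (A.bracket (A.bracket x y) z) w + A.form (A.bracket (A.bracket y z) x) w +
      A.form (A.bracket (A.bracket z x) y) w =
    (1/6 : ℝ) • (A.rho w (A.form (A.bracket x y) z) + A.rho w (A.form (A.bracket y z) x) +
      A.rho w (A.form (A.bracket z x) y)) := by
  have h : A.form (A.bracket (A.bracket x y) z + A.bracket (A.bracket y z) x +
      A.bracket (A.bracket z x) y) w = A.form (A.Dop ((1/6 : ℝ) •
      (A.form (A.bracket x y) z + A.form (A.bracket y z) x + A.form (A.bracket z x) y))) w := by
    rw [A.axiom1 x y z]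
  simp only [map_add, LinearMap.add_apply] at h
  rw [h, A.D_def, Derivation.map_smul]
  rw [Derivation.map_add, Derivation.map_add]

/-- Expanded form of axiom 5 applied to a bracket in the first slot. -/
lemma hTI (A : CourantAlgebroidSkew C E) (x y w z : E) :
    A.rho w (A.form (A.bracket x y) z) =
    - A.form (A.bracket (A.bracket x y) w) z + A.form (A.bracket x y) (A.bracket w z) +
      (1/2 : ℝ) • A.rho z (A.form (A.bracket x y) w) +
      (1/2 : ℝ) • A.rho (A.bracket x y) (A.form w z) := by
  have h := A.axiom5 w (A.bracket x y) z
  rw [h]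
  rw [A.bracket_skew w (A.bracket x y)]
  simp only [map_add, map_neg, LinearMap.add_apply, LinearMap.neg_apply,
    LinearMap.map_smul_of_tower, map_smul, LinearMap.smul_apply]
  rw [A.D_def, A.form_symm (A.bracket x y) (A.Dop (A.form w z)), A.D_def,
    A.form_symm w (A.bracket x y)]
  ring_nf

lemma lQs1 (A : CourantAlgebroidSkew C E) (x y z w : E) :
    A.form (A.bracket x y) (A.bracket z w) = - A.form (A.bracket x y) (A.bracket w z) := by
  rw [A.bracket_skew z w, map_neg]

lemma lQs2 (A : CourantAlgebroidSkew C E) (x y z w : E) :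
    A.form (A.bracket x y) (A.bracket z w) = A.form (A.bracket z w) (A.bracket x y) :=
  A.form_symm _ _

lemma lQs3 (A : CourantAlgebroidSkew C E) (x y z w : E) :
    A.form (A.bracket x y) (A.bracket z w) = - A.form (A.bracket y x) (A.bracket z w) := by
  rw [A.bracket_skew x y, map_neg, LinearMap.neg_apply]

lemma lBs (A : CourantAlgebroidSkew C E) (x y z w : E) :
    A.form (A.bracket (A.bracket x y) z) w = - A.form (A.bracket (A.bracket y x) z) w := by
  rw [A.bracket_skew x y, map_neg, LinearMap.neg_apply, map_neg, LinearMap.neg_apply]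

lemma lRs (A : CourantAlgebroidSkew C E) (w x y z : E) :
    A.rho w (A.form (A.bracket x y) z) = - A.rho w (A.form (A.bracket y x) z) := by
  rw [A.bracket_skew x y, map_neg, LinearMap.neg_apply, map_neg]

lemma lGs1 (A : CourantAlgebroidSkew C E) (x y z w : E) :
    A.rho (A.bracket x y) (A.form z w) = A.rho (A.bracket x y) (A.form w z) := by
  rw [A.form_symm z w]

end Helpers

set_option maxHeartbeats 2000000 in
/-- In a Courant algebroid (original skew-symmetric definition), with
`J := ⟨J(e₁,e₂,e₃),e₄⟩ − ⟨J(e₁,e₂,e₄),e₃⟩ + ⟨J(e₁,e₃,e₄),e₂⟩ − ⟨J(e₂,e₃,e₄),e₁⟩`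
and `K := ⟨[e₁,e₂],[e₃,e₄]⟩ − ⟨[e₁,e₃],[e₂,e₄]⟩ + ⟨[e₁,e₄],[e₂,e₃]⟩`, one has
`K + 2J = 0`. -/
theorem courant_skew_JK {C E : Type*} [CommRing C] [Algebra ℝ C]
    [AddCommGroup E] [Module ℝ E] [Module C E] [IsScalarTower ℝ C E]
    (A : CourantAlgebroidSkew C E) (e₁ e₂ e₃ e₄ : E) :
    (A.form (A.bracket e₁ e₂) (A.bracket e₃ e₄) -
      A.form (A.bracket e₁ e₃) (A.bracket e₂ e₄) +
      A.form (A.bracket e₁ e₄) (A.bracket e₂ e₃)) +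
    2 * (A.form (A.J e₁ e₂ e₃) e₄ - A.form (A.J e₁ e₂ e₄) e₃ +
      A.form (A.J e₁ e₃ e₄) e₂ - A.form (A.J e₂ e₃ e₄) e₁) = 0 := by
  simp only [CourantAlgebroidSkew.J, map_add, LinearMap.add_apply, two_mul]
  linear_combination (norm := module) (9/4 : ℝ) • hA1 A e₁ e₂ e₃ e₄ +
      (-9/4 : ℝ) • hA1 A e₁ e₂ e₄ e₃ +
      (9/4 : ℝ) • hA1 A e₁ e₃ e₄ e₂ +
      (-9/4 : ℝ) • hA1 A e₂ e₃ e₄ e₁ +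
      (1/4 : ℝ) • hTI A e₁ e₂ e₄ e₃ +
      (-1/4 : ℝ) • hTI A e₁ e₂ e₃ e₄ +
      (-1/4 : ℝ) • hTI A e₁ e₃ e₄ e₂ +
      (1/4 : ℝ) • hTI A e₁ e₃ e₂ e₄ +
      (1/4 : ℝ) • hTI A e₁ e₄ e₃ e₂ +
      (-1/4 : ℝ) • hTI A e₁ e₄ e₂ e₃ +
      (1/4 : ℝ) • hTI A e₂ e₃ e₄ e₁ +
      (-1/4 : ℝ) • hTI A e₂ e₃ e₁ e₄ +
      (-1/4 : ℝ) • hTI A e₂ e₄ e₃ e₁ +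
      (1/4 : ℝ) • hTI A e₂ e₄ e₁ e₃ +
      (1/4 : ℝ) • hTI A e₃ e₄ e₂ e₁ +
      (-1/4 : ℝ) • hTI A e₃ e₄ e₁ e₂ +
      (1/4 : ℝ) • lQs1 A e₁ e₂ e₃ e₄ +
      (1/4 : ℝ) • lQs2 A e₁ e₂ e₃ e₄ +
      (1/4 : ℝ) • lQs3 A e₁ e₂ e₃ e₄ +
      (-1/8 : ℝ) • lGs1 A e₁ e₂ e₃ e₄ +
      (-1/4 : ℝ) • lQs1 A e₁ e₃ e₂ e₄ +
      (-1/2 : ℝ) • lQs2 A e₁ e₃ e₂ e₄ +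
      (-1/4 : ℝ) • lBs A e₁ e₃ e₂ e₄ +
      (3/8 : ℝ) • lRs A e₄ e₁ e₃ e₂ +
      (1/8 : ℝ) • lGs1 A e₁ e₃ e₂ e₄ +
      (1/4 : ℝ) • lQs1 A e₁ e₄ e₂ e₃ +
      (1/2 : ℝ) • lQs2 A e₁ e₄ e₂ e₃ +
      (1/4 : ℝ) • lBs A e₁ e₄ e₂ e₃ +
      (-3/8 : ℝ) • lRs A e₃ e₁ e₄ e₂ +
      (-1/8 : ℝ) • lGs1 A e₁ e₄ e₂ e₃ +
      (-1/4 : ℝ) • lBs A e₁ e₄ e₃ e₂ +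
      (3/8 : ℝ) • lRs A e₂ e₁ e₄ e₃ +
      (-1/4 : ℝ) • lQs2 A e₂ e₁ e₃ e₄ +
      (1/4 : ℝ) • lQs1 A e₂ e₃ e₁ e₄ +
      (-1/8 : ℝ) • lGs1 A e₂ e₃ e₁ e₄ +
      (-1/4 : ℝ) • lQs1 A e₂ e₄ e₁ e₃ +
      (1/8 : ℝ) • lGs1 A e₂ e₄ e₁ e₃ +
      (1/4 : ℝ) • lBs A e₂ e₄ e₃ e₁ +
      (-3/8 : ℝ) • lRs A e₁ e₂ e₄ e₃ +
      (-1/8 : ℝ) • lGs1 A e₃ e₄ e₁ e₂
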